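/- arXiv:2109.08793 — 2 statements merged into one kernel-verified Lean document; each statement's English description precedes it below -/
import Mathlib

section
/- Define ϖ(x) = (e^x/(1+e^x))·x − ln(1+e^x) for x ∈ ℝ. Then |ϖ(x)| ≤ ln 2 for all x ∈ ℝ. -/
/-!
Writing `s = eˣ/(1+eˣ)` for the logistic sigmoid, one has `log s = x − log(1+eˣ)` and
`log(1−s) = −log(1+eˣ)`, so `ϖ(x) = s·x − log(1+eˣ)` is exactly minus the binary entropy of `s`.
Binary entropy takes values in `[0, log 2]`.
-/

namespace Real

lemma exp_div_one_add_exp (x : ℝ) : exp x / (1 + exp x) = sigmoid x := by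
  rw [sigmoid_def, exp_neg]
  field_simp
  ring

lemma log_sigmoid (x : ℝ) : log (sigmoid x) = x - log (1 + exp x) := by
  rw [← exp_div_one_add_exp, log_div (exp_pos x).ne' (by positivity), log_exp]

lemma log_one_sub_sigmoid (x : ℝ) : log (1 - sigmoid x) = -log (1 + exp x) := by
  rw [← sigmoid_neg, sigmoid_def, neg_neg, log_inv]

lemma sigmoid_mul_sub_log_one_add_exp (x : ℝ) :
    sigmoid x * x - log (1 + exp x) = -binEntropy (sigmoid x) := by
  rw [binEntropy, log_inv, log_inv, log_sigmoid, log_one_sub_sigmoid]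
  ring

lemma abs_sigmoid_mul_sub_log_one_add_exp_le_log_two (x : ℝ) :
    |sigmoid x * x - log (1 + exp x)| ≤ log 2 := by
  rw [sigmoid_mul_sub_log_one_add_exp, abs_neg,
    abs_of_nonneg (binEntropy_nonneg (sigmoid_nonneg x) (sigmoid_le_one x))]
  exact binEntropy_le_log_two

end Real

/-- With `ϖ(x) = (eˣ/(1+eˣ))·x − ln(1+eˣ)`, we have `|ϖ(x)| ≤ ln 2` for all `x`. -/
theorem stmt4 (ϖ : ℝ → ℝ)
    (hϖ : ϖ = fun x => (Real.exp x / (1 + Real.exp x)) * x - Real.log (1 + Real.exp x)) :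
    ∀ x : ℝ, |ϖ x| ≤ Real.log 2 := by
  intro x
  simpa only [hϖ, Real.exp_div_one_add_exp] using
    Real.abs_sigmoid_mul_sub_log_one_add_exp_le_log_two x
end

section
/- Let FZ^sp_τ(q,e,y) = (e^e/(1+e^e))·[e + τ⁻¹max(q−y,0) − q] − ln(1+e^e) + ln(1+e^y). Then FZ^sp_τ(q,e,y) ≥ 0 for all (q,e,y) ∈ ℝ³ and τ ∈ (0,1). -/
/-!
Softplus `η(t) = log (1 + exp t)` is increasing and convex with `η' = exp t / (1 + exp t)`.
Since `τ⁻¹ ≥ 1`, the point `q - τ⁻¹ * max (q - y) 0` lies below `y`, so by monotonicity and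
the tangent line of `η` at `e`,
`η y ≥ η (q - τ⁻¹ * max (q - y) 0) ≥ η e + η' e * (q - τ⁻¹ * max (q - y) 0 - e)`,
which rearranges to the claim.
-/

open Real

lemma log_one_add_exp_le_log_one_add_exp {a b : ℝ} (hab : a ≤ b) :
    log (1 + exp a) ≤ log (1 + exp b) :=
  log_le_log (by positivity) (by gcongr)

lemma log_one_add_exp_add_mul_sub_le (a b : ℝ) :
    log (1 + exp a) + exp a / (1 + exp a) * (b - a) ≤ log (1 + exp b) := by
  set σ := exp a / (1 + exp a) with hσ
  have hσ0 : 0 ≤ σ := by positivity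
  have hσ1 : σ ≤ 1 := (div_le_one (by positivity)).2 (by linarith)
  -- Since `(1 + exp a) * (σ * exp (b - a) + (1 - σ)) = 1 + exp b`, convexity of `exp` suffices.
  have hconv : exp (σ * (b - a)) ≤ σ * exp (b - a) + (1 - σ) := by
    simpa using
      convexOn_exp.2 (Set.mem_univ (b - a)) (Set.mem_univ 0) hσ0 (sub_nonneg.2 hσ1) (by ring)
  calc log (1 + exp a) + σ * (b - a) = log ((1 + exp a) * exp (σ * (b - a))) := by
        rw [log_mul (by positivity) (exp_pos _).ne', log_exp]
    _ ≤ log ((1 + exp a) * (σ * exp (b - a) + (1 - σ))) := by gcongr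
    _ = log (1 + exp b) := by
        rw [hσ, exp_sub]
        field_simp
        congr 1
        ring

lemma le_inv_mul_max_zero {τ : ℝ} (hτ₀ : 0 < τ) (hτ₁ : τ ≤ 1) (x : ℝ) :
    x ≤ τ⁻¹ * max x 0 :=
  calc x ≤ max x 0 := le_max_left x 0
    _ ≤ τ⁻¹ * max x 0 := le_mul_of_one_le_left (le_max_right x 0) (one_le_inv₀ hτ₀ |>.2 hτ₁)

/-- The softplus-specified FZ loss is nonnegative on all of `ℝ³`. -/
theorem stmt8 (τ : ℝ) (hτ : τ ∈ Set.Ioo (0:ℝ) 1) (q e y : ℝ) :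
    0 ≤ (Real.exp e / (1 + Real.exp e)) * (e + τ⁻¹ * max (q - y) 0 - q)
        - Real.log (1 + Real.exp e) + Real.log (1 + Real.exp y) := by
  set z := q - τ⁻¹ * max (q - y) 0
  have hzy : z ≤ y := by linarith [le_inv_mul_max_zero hτ.1 hτ.2.le (q - y)]
  have htangent := log_one_add_exp_add_mul_sub_le e z
  have hmono := log_one_add_exp_le_log_one_add_exp hzy
  linarith
end
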